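/- arXiv:0907.1141 — 5 statements merged into one kernel-verified Lean document; each statement's English description precedes it below -/
import Mathlib

section
/- If R is a ring and σ is an endomorphism of R such that R[t;σ]/(t²) is left morphic, then R is unit regular. -/
/-- `R[t;σ]/(t²)`, the trivial extension `R ⋉ R(σ)`: pairs `(a, m)` with
multiplication `(a,m)(b,n) = (ab, an + mσ(b))`. -/
def SkewTriv (R : Type*) [Ring R] (σ : R →+* R) : Type _ := R × R

namespace SkewTriv

variable {R : Type*} [Ring R] {σ : R →+* R}

/-- The element `(a, m)` of `SkewTriv R σ`. -/
def mk (σ : R →+* R) (a m : R) : SkewTriv R σ := (a, m)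

instance : AddCommGroup (SkewTriv R σ) := inferInstanceAs (AddCommGroup (R × R))

instance : Mul (SkewTriv R σ) :=
  ⟨fun x y => mk σ (x.1 * y.1) (x.1 * y.2 + x.2 * σ y.1)⟩

instance : One (SkewTriv R σ) := ⟨mk σ 1 0⟩

theorem one_def : (1 : SkewTriv R σ) = mk σ 1 0 := rfl

theorem zero_def : (0 : SkewTriv R σ) = mk σ 0 0 := rfl

theorem mul_def (x y : SkewTriv R σ) :
    x * y = mk σ (x.1 * y.1) (x.1 * y.2 + x.2 * σ y.1) := rfl

theorem add_def (x y : SkewTriv R σ) :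
    x + y = mk σ (x.1 + y.1) (x.2 + y.2) := rfl

instance : Ring (SkewTriv R σ) :=
  { (inferInstanceAs (AddCommGroup (SkewTriv R σ)) : AddCommGroup (SkewTriv R σ)),
      (inferInstanceAs (Mul (SkewTriv R σ)) : Mul (SkewTriv R σ)),
      (inferInstanceAs (One (SkewTriv R σ)) : One (SkewTriv R σ)) with
    mul_assoc := by
      intro x y z
      simp only [mul_def, add_def, one_def, zero_def]
      apply Prod.ext <;>
        simp [mul_def, mk, mul_assoc, mul_add, add_mul, map_mul, add_assoc]
    one_mul := by
      intro x
      simp only [mul_def, add_def, one_def, zero_def]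
      apply Prod.ext <;> simp [mul_def, one_def, mk]
    mul_one := by
      intro x
      simp only [mul_def, add_def, one_def, zero_def]
      apply Prod.ext <;> simp [mul_def, one_def, mk]
    left_distrib := by
      intro x y z
      simp only [mul_def, add_def, one_def, zero_def]
      apply Prod.ext <;>
        simp [mul_def, add_def, mk, mul_add, add_mul, map_add] <;> abel
    right_distrib := by
      intro x y z
      simp only [mul_def, add_def, one_def, zero_def]
      apply Prod.ext <;>
        simp [mul_def, add_def, mk, mul_add, add_mul, map_add] <;> abel
    zero_mul := by
      intro x
      simp only [mul_def, add_def, one_def, zero_def]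
      apply Prod.ext <;> simp [mul_def, zero_def, mk]
    mul_zero := by
      intro x
      simp only [mul_def, add_def, one_def, zero_def]
      apply Prod.ext <;> simp [mul_def, zero_def, mk] }

end SkewTriv

/-- A ring `S` is left morphic if every element `x` admits `y` with
`ann_l(x) = Sy` and `ann_l(y) = Sx`. -/
def IsLeftMorphicRing (S : Type*) [Ring S] : Prop :=
  ∀ x : S, ∃ y : S, ({z : S | z * x = 0} = {z : S | ∃ w, z = w * y}) ∧
    ({z : S | z * y = 0} = {z : S | ∃ w, z = w * x})

/-!
Left morphicity of `S = R[t;σ]/(t²)` at `(0, a)` makes `a` regular in `R`. Then `x = (a, 0)` is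
an element of `S` with `x = x t x`, `ann_l(x) = S y` and `ann_l(y) = S x`. Writing
`1 - x t = w y`, the element `t x t + y` is a unit with inverse `x + w (1 - t x)`, and
`x (t x t + y) x = x`. The first projection `S → R` is a ring map, so this unit descends to `R`.
-/

def IsLeftMorphic {S : Type*} [Ring S] (x : S) : Prop :=
  ∃ y : S, ({z : S | z * x = 0} = {z : S | ∃ w, z = w * y}) ∧
    ({z : S | z * y = 0} = {z : S | ∃ w, z = w * x})

theorem IsLeftMorphic.exists_unit_mul_mul_eq {S : Type*} [Ring S] {x t : S}
    (hx : IsLeftMorphic x) (hreg : x * t * x = x) : ∃ u : Sˣ, x = x * u * x := by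
  obtain ⟨y, hann_x, hann_y⟩ := hx
  have ann_x (z : S) : z * x = 0 ↔ ∃ w, z = w * y := Set.ext_iff.mp hann_x z
  have ann_y (z : S) : z * y = 0 ↔ ∃ w, z = w * x := Set.ext_iff.mp hann_y z
  have hxy : x * y = 0 := (ann_y x).mpr ⟨1, (one_mul x).symm⟩
  have hyx : y * x = 0 := (ann_x y).mpr ⟨1, (one_mul y).symm⟩
  obtain ⟨w, hw⟩ := (ann_x (1 - x * t)).mp (by rw [sub_mul, one_mul, hreg, sub_self])
  obtain ⟨r, hr⟩ := (ann_y (x * t * w)).mp (by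
    rw [mul_assoc, ← hw, mul_sub, mul_one, ← mul_assoc, hreg, sub_self])
  obtain ⟨s, hs⟩ := (ann_y (y * w - 1)).mp (by
    rw [sub_mul, one_mul, mul_assoc, ← hw, mul_sub, mul_one, ← mul_assoc, hyx, zero_mul,
      sub_zero, sub_self])
  set v := t * x * t + y
  have hvx : v * x = t * x := by
    rw [add_mul, hyx, add_zero, mul_assoc t x t, mul_assoc t, hreg]
  have hxv : x * v = x * t := by
    rw [mul_add, hxy, add_zero, ← mul_assoc, ← mul_assoc, hreg]
  have hvw : v * w = 1 + (t * r + s) * x := by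
    rw [add_mul, mul_assoc, mul_assoc, ← mul_assoc x, hr, ← sub_add_cancel (y * w) 1, hs]
    noncomm_ring
  have hx_sub : x * (1 - t * x) = 0 := by
    rw [mul_sub, mul_one, ← mul_assoc, hreg, sub_self]
  refine ⟨⟨v, x + w * (1 - t * x), ?_, ?_⟩, ?_⟩
  · show v * (x + w * (1 - t * x)) = 1
    rw [mul_add, hvx, ← mul_assoc, hvw, add_mul, one_mul, mul_assoc, hx_sub, mul_zero]
    noncomm_ring
  · show (x + w * (1 - t * x)) * v = 1
    have hsub_v : (1 - t * x) * v = y := by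
      rw [sub_mul, one_mul, mul_assoc, hxv, ← mul_assoc, add_sub_cancel_left]
    rw [add_mul, hxv, mul_assoc, hsub_v, ← hw, add_sub_cancel]
  · show x = x * v * x
    rw [hxv, hreg]

namespace SkewTriv

variable {R : Type*} [Ring R] {σ : R →+* R}

@[simp]
theorem mk_mul_mk (a m b n : R) :
    mk σ a m * mk σ b n = mk σ (a * b) (a * n + m * σ b) := rfl

theorem mk_add_mk (a m b n : R) : mk σ a m + mk σ b n = mk σ (a + b) (m + n) := rfl

theorem mk_eq_mk_iff {a m b n : R} : mk σ a m = mk σ b n ↔ a = b ∧ m = n := Prod.ext_iff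

theorem exists_eq_mk (x : SkewTriv R σ) : ∃ a m, x = mk σ a m := ⟨x.1, x.2, rfl⟩

theorem mk_eq_zero_iff {a m : R} : mk σ a m = 0 ↔ a = 0 ∧ m = 0 := mk_eq_mk_iff

variable (σ) in
def inl : R →+* SkewTriv R σ where
  toFun a := mk σ a 0
  map_one' := rfl
  map_mul' a b := by simp
  map_zero' := rfl
  map_add' a b := by rw [mk_add_mk, add_zero]

def fst : SkewTriv R σ →+* R where
  toFun x := x.1
  map_one' := rfl
  map_mul' _ _ := rfl
  map_zero' := rfl
  map_add' _ _ := rfl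

@[simp]
theorem fst_inl (a : R) : fst (inl σ a) = a := rfl

/-- `(0, 1)` annihilates `(0, a)`, so it is a multiple `(w₁, w₂) (b, c)` of the generator; then
`(σ(b) w₁, σ(b) w₂ - 1)` kills `(b, c)`, and writing it as a multiple of `(0, a)` yields an inner
inverse of `a`. -/
theorem exists_mul_mul_eq_of_isLeftMorphic {a : R} (h : IsLeftMorphic (mk σ 0 a)) :
    ∃ t, a * t * a = a := by
  obtain ⟨y, hann_x, hann_y⟩ := h
  obtain ⟨b, c, rfl⟩ := exists_eq_mk y
  have ann_x (z : SkewTriv R σ) : z * mk σ 0 a = 0 ↔ ∃ w, z = w * mk σ b c :=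
    Set.ext_iff.mp hann_x z
  have ann_y (z : SkewTriv R σ) : z * mk σ b c = 0 ↔ ∃ w, z = w * mk σ 0 a :=
    Set.ext_iff.mp hann_y z
  have hab : a * σ b = 0 := by
    have := (ann_y (mk σ 0 a)).mpr ⟨1, (one_mul _).symm⟩
    simpa [mk_eq_zero_iff] using this
  obtain ⟨w, hw⟩ := (ann_x (mk σ 0 1)).mp (by simp [mk_eq_zero_iff])
  obtain ⟨w₁, w₂, rfl⟩ := exists_eq_mk w
  obtain ⟨hwb, hwc⟩ := mk_eq_mk_iff.mp (hw.trans (mk_mul_mk _ _ _ _))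
  obtain ⟨p, hp⟩ := (ann_y (mk σ (σ b * w₁) (σ b * w₂ - 1))).mp (by
    rw [mk_mul_mk, mk_eq_zero_iff, mul_assoc, ← hwb, mul_zero]
    refine ⟨rfl, ?_⟩
    rw [sub_mul, one_mul, mul_assoc, mul_assoc, ← add_sub_assoc, ← mul_add, ← hwc, mul_one,
      sub_self])
  obtain ⟨p₁, p₂, rfl⟩ := exists_eq_mk p
  have hpa : σ b * w₂ - 1 = p₁ * a := by
    simpa using (mk_eq_mk_iff.mp (hp.trans (mk_mul_mk _ _ _ _))).2
  refine ⟨-p₁, ?_⟩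
  rw [mul_assoc, neg_mul, ← hpa, mul_neg, mul_sub, ← mul_assoc, hab, zero_mul, mul_one,
    zero_sub, neg_neg]

end SkewTriv

/-- If `R[t;σ]/(t²)` is left morphic, then `R` is unit regular. -/
theorem stmt8 {R : Type*} [Ring R] (σ : R →+* R)
    (h : IsLeftMorphicRing (SkewTriv R σ)) :
    ∀ a : R, ∃ u : Rˣ, a = a * u * a := by
  intro a
  obtain ⟨t, ht⟩ := SkewTriv.exists_mul_mul_eq_of_isLeftMorphic (h (SkewTriv.mk σ 0 a))
  obtain ⟨u, hu⟩ := IsLeftMorphic.exists_unit_mul_mul_eq (h (SkewTriv.inl σ a))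
    (t := SkewTriv.inl σ t) (by rw [← map_mul, ← map_mul, ht])
  refine ⟨Units.map SkewTriv.fst.toMonoidHom u, ?_⟩
  simpa using congrArg SkewTriv.fst hu
end

section
/- For a ring R, the following are equivalent: (1) the trivial extension R ⋉ R (with σ the identity) is left morphic; (2) R is unit regular. -/
namespace Stmt9Aux
open TrivSqZeroExt

variable {R : Type*} [Ring R]

def tmk (a b : R) : TrivSqZeroExt R R := inl a + inr b

@[simp] lemma tmk_fst (a b : R) : (tmk a b).fst = a := by simp [tmk]
@[simp] lemma tmk_snd (a b : R) : (tmk a b).snd = b := by simp [tmk]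

lemma texp (x : TrivSqZeroExt R R) : x = tmk x.fst x.snd := by ext <;> simp

lemma tmul (a b c d : R) : tmk a b * tmk c d = tmk (a*c) (a*d + b*c) := by
  ext <;> simp [fst_mul, snd_mul, MulOpposite.smul_eq_mul_unop]

lemma tzero : (0 : TrivSqZeroExt R R) = tmk 0 0 := by ext <;> simp
lemma tone : (1 : TrivSqZeroExt R R) = tmk 1 0 := by ext <;> simp

lemma tmk_eq (a b c d : R) : tmk a b = tmk c d ↔ a = c ∧ b = d := by
  constructor
  · intro h
    exact ⟨by simpa using congrArg TrivSqZeroExt.fst h,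
      by simpa using congrArg TrivSqZeroExt.snd h⟩
  · rintro ⟨rfl, rfl⟩; rfl

lemma tmk_eq_zero (a b : R) : tmk a b = 0 ↔ a = 0 ∧ b = 0 := by rw [tzero, tmk_eq]

/-- Unit regular rings have stable range one. -/
lemma sr1 (H : ∀ a : R, ∃ u : Rˣ, a = a * u * a) (a x b : R) (h : a * x + b = 1) :
    ∃ y : R, IsUnit (a + b * y) := by
  obtain ⟨u, hu⟩ := H a
  have he : (a * ↑u) * (a * ↑u) = a * ↑u := by
    calc (a * ↑u) * (a * ↑u) = (a * ↑u * a) * ↑u := by noncomm_ring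
    _ = a * ↑u := by rw [← hu]
  have hev : (a * ↑u) * ↑(u⁻¹) = a := Units.mul_inv_cancel_right a u
  have h1e : (1 - a * ↑u) * (a * ↑u) = 0 := by rw [sub_mul, one_mul, he, sub_self]
  set e : R := a * ↑u with hedef
  set v : R := ↑(u⁻¹) with hvdef
  have hNN : (e * (v * x) * (1 - e)) * (e * (v * x) * (1 - e)) = 0 := by
    calc (e * (v * x) * (1 - e)) * (e * (v * x) * (1 - e))
        = e * (v * x) * (((1 - e) * e) * ((v * x) * (1 - e))) := by noncomm_ring
    _ = 0 := by rw [h1e]; simp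
  have hunit : IsUnit (1 - e * (v * x) * (1 - e)) := by
    refine ⟨⟨_, 1 + e * (v * x) * (1 - e), ?_, ?_⟩, rfl⟩
    · calc (1 - e * (v*x) * (1-e)) * (1 + e * (v*x) * (1-e))
          = 1 - (e * (v*x) * (1-e)) * (e * (v*x) * (1-e)) := by noncomm_ring
      _ = 1 := by rw [hNN, sub_zero]
    · calc (1 + e * (v*x) * (1-e)) * (1 - e * (v*x) * (1-e))
          = 1 - (e * (v*x) * (1-e)) * (e * (v*x) * (1-e)) := by noncomm_ring
      _ = 1 := by rw [hNN, sub_zero]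
  have hb : b = 1 - e * (v * x) := by
    have hax : e * (v * x) = a * x := by rw [← mul_assoc, hev]
    rw [hax, eq_sub_iff_add_eq, add_comm]; exact h
  have key : e + b * (1 - e) = 1 - e * (v * x) * (1 - e) := by
    rw [hb]; noncomm_ring
  refine ⟨(1 - e) * v, ?_⟩
  have hfin : a + b * ((1 - e) * v) = (e + b * (1 - e)) * v := by
    rw [← hev]; noncomm_ring
  rw [hfin, key]
  exact hunit.mul (Units.isUnit u⁻¹)

/-- Corners of unit-regular rings: relative unit regularity. -/
lemma corner (H : ∀ a : R, ∃ u : Rˣ, a = a * u * a) (f c : R) (hf : f * f = f)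
    (hc : c = f * c * f) :
    ∃ v w : R, v = f * v * f ∧ w = f * w * f ∧ v * w = f ∧ w * v = f ∧ c * v * c = c := by
  have hcf : c * f = c := by
    calc c * f = (f * c * f) * f := by rw [← hc]
    _ = f * c * (f * f) := by noncomm_ring
    _ = c := by rw [hf, ← hc]
  have hfc : f * c = c := by
    calc f * c = f * (f * c * f) := by rw [← hc]
    _ = (f * f) * (c * f) := by noncomm_ring
    _ = f * (c * f) := by rw [hf]
    _ = f * c * f := (mul_assoc f c f).symm
    _ = c := hc.symm
  obtain ⟨u₁, hu₁⟩ := H c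
  set x0 : R := f * ↑u₁ * f with hx0def
  clear_value x0
  have hx₀ : c * x0 * c = c := by
    calc c * x0 * c = (c * f) * ↑u₁ * (f * c) := by rw [hx0def]; noncomm_ring
    _ = c * ↑u₁ * c := by rw [hcf, hfc]
    _ = c := hu₁.symm
  have hx0f : x0 * f = x0 := by
    calc x0 * f = f * ↑u₁ * (f * f) := by rw [hx0def]; noncomm_ring
    _ = x0 := by rw [hf, hx0def, mul_assoc]
  have hfx0 : f * x0 = x0 := by
    calc f * x0 = (f * f) * (↑u₁ * f) := by rw [hx0def]; noncomm_ring
    _ = x0 := by rw [hf, hx0def, mul_assoc]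
  set x : R := x0 * c * x0 with hxdef
  clear_value x
  have hxc2 : x * c = x0 * c := by
    calc x * c = x0 * (c * x0 * c) := by rw [hxdef]; noncomm_ring
    _ = x0 * c := by rw [hx₀]
  have hcx2 : c * x = c * x0 := by
    calc c * x = (c * x0 * c) * x0 := by rw [hxdef]; noncomm_ring
    _ = c * x0 := by rw [hx₀]
  have hcxc : c * x * c = c := by rw [hcx2]; exact hx₀
  have hxcx : x * c * x = x := by
    rw [hxc2, hxdef]
    calc (x0 * c) * (x0 * c * x0) = x0 * (c * x0 * c) * x0 := by noncomm_ring
    _ = x0 * c * x0 := by rw [hx₀]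
  have hxf : x * f = x := by
    calc x * f = x0 * c * (x0 * f) := by rw [hxdef, mul_assoc]
    _ = x := by rw [hx0f, hxdef]
  have hfx : f * x = x := by
    calc f * x = (f * x0) * (c * x0) := by rw [hxdef]; noncomm_ring
    _ = (x0 * c) * x0 := by rw [hfx0, mul_assoc]
    _ = x := hxdef.symm
  -- SR1 application
  have hAX : (c + 1 - f) * (x + 1 - f) + (f - c * x) = 1 := by
    have e1 : (c + 1 - f) * (x + 1 - f) + (f - c * x)
        = (c * x - c * x) + (c - c * f) + (x - f * x) + (f * f - f) + 1 := by noncomm_ring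
    rw [e1, hcf, hfx, hf]; abel
  obtain ⟨y, hy⟩ := sr1 H (c + 1 - f) (x + 1 - f) (f - c * x) hAX
  obtain ⟨U, hU⟩ := hy
  have hf0 : (1 - f) * f = 0 := by rw [sub_mul, one_mul, hf, sub_self]
  have h1c : (1 - f) * c = 0 := by rw [sub_mul, one_mul, hfc, sub_self]
  have h1 : (1 - f) * ↑U = 1 - f := by
    calc (1 - f) * ↑U
        = ((1-f)*c) + (1 - f) - ((1-f)*f) + (((1-f)*f) - ((1-f)*c)*x)*y := by
          rw [hU]; noncomm_ring
    _ = 1 - f := by rw [h1c, hf0]; noncomm_ring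
  have h2 : (1 - f) * ↑(U⁻¹) = 1 - f := by
    conv_lhs => rw [← h1]
    rw [mul_assoc, Units.mul_inv, mul_one]
  have k1 : f * (↑U * f) = ↑U * f := by
    have e2 : f * (↑U * f) = ↑U * f - ((1 - f) * ↑U) * f := by noncomm_ring
    rw [e2, h1, hf0, sub_zero]
  have k2 : f * (↑(U⁻¹) * f) = ↑(U⁻¹) * f := by
    have e2 : f * (↑(U⁻¹) * f) = ↑(U⁻¹) * f - ((1 - f) * ↑(U⁻¹)) * f := by noncomm_ring
    rw [e2, h2, hf0, sub_zero]
  refine ⟨f * ↑(U⁻¹) * f, f * ↑U * f, ?_, ?_, ?_, ?_, ?_⟩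
  · have : f * (f * ↑(U⁻¹) * f) * f = f * ↑(U⁻¹) * f := by
      calc f * (f * ↑(U⁻¹) * f) * f = (f*f) * ↑(U⁻¹) * (f*f) := by noncomm_ring
      _ = f * ↑(U⁻¹) * f := by rw [hf]
    exact this.symm
  · have : f * (f * ↑U * f) * f = f * ↑U * f := by
      calc f * (f * ↑U * f) * f = (f*f) * ↑U * (f*f) := by noncomm_ring
      _ = f * ↑U * f := by rw [hf]
    exact this.symm
  · -- v * w = f
    calc (f * ↑(U⁻¹) * f) * (f * ↑U * f) = (f * ↑(U⁻¹)) * ((f*f) * (↑U * f)) := by noncomm_ring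
    _ = (f * ↑(U⁻¹)) * (f * (↑U * f)) := by rw [hf]
    _ = (f * ↑(U⁻¹)) * (↑U * f) := by rw [k1]
    _ = f * ((↑(U⁻¹) * ↑U) * f) := by noncomm_ring
    _ = f * f := by rw [Units.inv_mul, one_mul]
    _ = f := hf
  · calc (f * ↑U * f) * (f * ↑(U⁻¹) * f) = (f * ↑U) * ((f*f) * (↑(U⁻¹) * f)) := by noncomm_ring
    _ = (f * ↑U) * (f * (↑(U⁻¹) * f)) := by rw [hf]
    _ = (f * ↑U) * (↑(U⁻¹) * f) := by rw [k2]
    _ = f * ((↑U * ↑(U⁻¹)) * f) := by noncomm_ring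
    _ = f * f := by rw [Units.mul_inv, one_mul]
    _ = f := hf
  · -- c * v * c = c
    have hxU : x * ↑U = x * c := by
      calc x * ↑U = x*c + x - x*f + ((x*f) - (x*c*x))*y := by rw [hU]; noncomm_ring
      _ = x * c := by rw [hxf, hxcx]; noncomm_ring
    have hcxU : (c * x) * ↑U = c := by
      rw [mul_assoc, hxU, ← mul_assoc, hcxc]
    have hcUinv : c * ↑(U⁻¹) = c * x := by
      conv_lhs => rw [← hcxU]
      rw [mul_assoc, Units.mul_inv, mul_one]
    calc c * (f * ↑(U⁻¹) * f) * c = (c * f) * ↑(U⁻¹) * (f * c) := by noncomm_ring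
    _ = c * ↑(U⁻¹) * c := by rw [hcf, hfc]
    _ = (c * x) * c := by rw [hcUinv]
    _ = c := hcxc

/-- A regular, left morphic element is unit regular. -/
lemma lemA (a x₀ b s : R) (hreg : a * x₀ * a = a)
    (hba : b * a = 0) (hab : a * b = 0)
    (hs : s * b = 1 - a * (x₀ * a * x₀))
    (hann : ∀ z : R, z * b = 0 → ∃ t, z = t * a) :
    ∃ u : Rˣ, a * ↑u * a = a := by
  set x : R := x₀ * a * x₀ with hxdef
  clear_value x
  have haxa : a * x * a = a := by
    calc a * x * a = (a * x₀ * a) * (x₀ * a) := by rw [hxdef]; noncomm_ring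
    _ = a * (x₀ * a) := by rw [hreg]
    _ = a := by rw [← mul_assoc, hreg]
  have hxa : x * a = x₀ * a := by
    calc x * a = x₀ * (a * x₀ * a) := by rw [hxdef]; noncomm_ring
    _ = x₀ * a := by rw [hreg]
  have hxax : x * a * x = x := by
    rw [hxa, hxdef]
    calc (x₀ * a) * (x₀ * a * x₀) = x₀ * (a * x₀ * a) * x₀ := by noncomm_ring
    _ = x₀ * a * x₀ := by rw [hreg]
  have hsb : s * b = 1 - a * x := by rw [hs, hxdef]
  have hwu : (s + (a - s) * (x * a)) * (b + x) = 1 := by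
    have e1 : (s + (a - s) * (x * a)) * (b + x)
        = s * b + s * x + (a - s) * (x * (a * b)) + (a - s) * (x * a * x) := by noncomm_ring
    rw [e1, hab, hsb, hxax, mul_zero, mul_zero]
    noncomm_ring
  have hinj : ∀ z : R, z * (b + x) = 0 → z = 0 := by
    intro z hz
    have h1 : z * b + z * x = 0 := by rw [← mul_add]; exact hz
    have h3 : z * b * a + z * x * a = 0 := by
      calc z * b * a + z * x * a = (z * b + z * x) * a := by noncomm_ring
      _ = 0 := by rw [h1, zero_mul]
    have hba' : z * b * a = 0 := by rw [mul_assoc, hba, mul_zero]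
    have h4 : z * x * a = 0 := by rw [hba', zero_add] at h3; exact h3
    have h5 : z * x = 0 := by
      have e : (z * (x * a)) * x = z * x := by rw [mul_assoc, hxax]
      have e2 : z * (x * a) = 0 := by rw [← mul_assoc]; exact h4
      rw [← e, e2, zero_mul]
    have h6 : z * b = 0 := by rw [h5, add_zero] at h1; exact h1
    obtain ⟨t, ht⟩ := hann z h6
    have h10 : (z * x) * a = z := by
      rw [ht]
      calc ((t * a) * x) * a = t * (a * x * a) := by noncomm_ring
      _ = t * a := by rw [haxa]
    rw [← h10, h5, zero_mul]
  have huw : (b + x) * (s + (a - s) * (x * a)) = 1 := by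
    have h0 : (1 - (b + x) * (s + (a - s) * (x * a))) * (b + x) = 0 := by
      calc (1 - (b + x) * (s + (a - s) * (x * a))) * (b + x)
          = (b + x) - (b + x) * ((s + (a - s) * (x * a)) * (b + x)) := by noncomm_ring
      _ = 0 := by rw [hwu, mul_one, sub_self]
    have := hinj _ h0
    have h2 := sub_eq_zero.mp this
    exact h2.symm
  refine ⟨⟨b + x, s + (a - s) * (x * a), huw, hwu⟩, ?_⟩
  show a * (b + x) * a = a
  calc a * (b + x) * a = (a * b) * a + a * x * a := by noncomm_ring
  _ = a := by rw [hab, zero_mul, zero_add, haxa]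

/-- Annihilator computation for a pair of orthogonal idempotents. -/
lemma ell_orth (e g : R) (he : e*e = e) (hg : g*g = g) (heg : e*g = 0) (hge : g*e = 0) :
    {z : TrivSqZeroExt R R | z * tmk e g = 0} = {z | ∃ w, z = w * tmk (1-e-g) g} := by
  have hmid : (1-e-g)*e = 0 := by
    calc (1-e-g)*e = e - e*e - g*e := by noncomm_ring
    _ = 0 := by rw [he, hge]; abel
  have hmid2 : (1-e-g)*g = 0 := by
    calc (1-e-g)*g = g - e*g - g*g := by noncomm_ring
    _ = 0 := by rw [hg, heg]; abel
  have hmid3 : g*(1-e-g) = 0 := by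
    calc g*(1-e-g) = g - g*e - g*g := by noncomm_ring
    _ = 0 := by rw [hg, hge]; abel
  ext z
  simp only [Set.mem_setOf_eq]
  constructor
  · intro hz
    rw [texp z, tmul, tmk_eq_zero] at hz
    obtain ⟨h1, h2⟩ := hz
    have h3 : (z.fst*g)*e + (z.snd*e)*e = 0 := by rw [← add_mul, h2, zero_mul]
    have h4 : (z.fst*g)*e = 0 := by rw [mul_assoc, hge, mul_zero]
    have h5 : (z.snd*e)*e = z.snd*e := by rw [mul_assoc, he]
    have hye : z.snd*e = 0 := by rw [h4, h5, zero_add] at h3; exact h3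
    have hxg : z.fst*g = 0 := by rw [hye, add_zero] at h2; exact h2
    refine ⟨tmk (z.fst + z.snd*g) (z.snd - z.snd*g), ?_⟩
    conv_lhs => rw [texp z]
    rw [tmul, tmk_eq]
    constructor
    · have : (z.fst + z.snd*g)*(1-e-g)
          = (z.fst - z.fst*e - z.fst*g) + (z.snd*g - z.snd*(g*e) - z.snd*(g*g)) := by
        noncomm_ring
      rw [this, h1, hxg, hge, mul_zero, hg]
      abel
    · have : (z.fst + z.snd*g)*g + (z.snd - z.snd*g)*(1-e-g)
          = (z.fst*g + z.snd*(g*g)) + ((z.snd - z.snd*e - z.snd*g) - z.snd*(g*(1-e-g))) := by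
        noncomm_ring
      rw [this, hxg, hg, hye, hmid3, mul_zero]
      abel
  · rintro ⟨w, rfl⟩
    rw [texp w, tmul, tmul, tmk_eq_zero]
    have t1 : (w.fst*(1-e-g))*g = 0 := by rw [mul_assoc, hmid2, mul_zero]
    have t2 : (w.fst*g)*e = 0 := by rw [mul_assoc, hge, mul_zero]
    have t3 : (w.snd*(1-e-g))*e = 0 := by rw [mul_assoc, hmid, mul_zero]
    constructor
    · rw [mul_assoc, hmid, mul_zero]
    · rw [t1, add_mul, t2, t3]; simp

/-- Left-morphicness is invariant under multiplication by units. -/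
lemma transfer {T : Type*} [Ring T] (σ σ' τ τ' α γ : T)
    (hσ : σ*σ' = 1) (hσ' : σ'*σ = 1) (hτ : τ*τ' = 1) (hτ' : τ'*τ = 1)
    (heq : σ*α*τ = γ)
    (h : ∃ y, ({z : T | z*γ = 0} = {z | ∃ w, z = w*y}) ∧
      ({z : T | z*y = 0} = {z | ∃ w, z = w*γ})) :
    ∃ y, ({z : T | z*α = 0} = {z | ∃ w, z = w*y}) ∧
      ({z : T | z*y = 0} = {z | ∃ w, z = w*α}) := by
  obtain ⟨β, hb1, hb2⟩ := h
  rw [← heq] at hb1 hb2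
  have H1 : ∀ t : T, t*(σ*α*τ) = 0 ↔ ∃ w, t = w*β := fun t => by
    simpa using Set.ext_iff.mp hb1 t
  have H2 : ∀ t : T, t*β = 0 ↔ ∃ w, t = w*(σ*α*τ) := fun t => by
    simpa using Set.ext_iff.mp hb2 t
  refine ⟨τ*β*σ, ?_, ?_⟩
  · ext z
    simp only [Set.mem_setOf_eq]
    constructor
    · intro hz
      have h1 : (z*σ')*(σ*α*τ) = 0 := by
        calc (z*σ')*(σ*α*τ) = (z*(σ'*σ))*α*τ := by noncomm_ring
        _ = 0 := by rw [hσ', mul_one, hz, zero_mul]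
      obtain ⟨w, hw⟩ := (H1 _).mp h1
      refine ⟨w*τ', ?_⟩
      calc z = (z*σ')*σ := by rw [mul_assoc, hσ', mul_one]
      _ = (w*β)*σ := by rw [hw]
      _ = (w*τ')*(τ*β*σ) := by
          rw [show (w*τ')*(τ*β*σ) = (w*(τ'*τ))*(β*σ) from by noncomm_ring, hτ', mul_one,
            ← mul_assoc]
    · rintro ⟨w, rfl⟩
      have h1 : ((w*τ)*β)*(σ*α*τ) = 0 := (H1 _).mpr ⟨w*τ, rfl⟩
      have h2 : ((w*(τ*β*σ))*α)*τ = 0 := by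
        calc ((w*(τ*β*σ))*α)*τ = ((w*τ)*β)*(σ*α*τ) := by noncomm_ring
        _ = 0 := h1
      calc (w*(τ*β*σ))*α = (((w*(τ*β*σ))*α)*τ)*τ' := by
            conv_rhs => rw [mul_assoc, hτ, mul_one]
      _ = 0 := by rw [h2, zero_mul]
  · ext z
    simp only [Set.mem_setOf_eq]
    constructor
    · intro hz
      have h1 : (z*τ)*β = 0 := by
        have h0 : ((z*τ)*β)*σ = 0 := by
          calc ((z*τ)*β)*σ = z*(τ*β*σ) := by noncomm_ring
          _ = 0 := hz
        calc (z*τ)*β = (((z*τ)*β)*σ)*σ' := by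
              conv_rhs => rw [mul_assoc, hσ, mul_one]
        _ = 0 := by rw [h0, zero_mul]
      obtain ⟨w, hw⟩ := (H2 _).mp h1
      refine ⟨w*σ, ?_⟩
      calc z = (z*τ)*τ' := by rw [mul_assoc, hτ, mul_one]
      _ = (w*(σ*α*τ))*τ' := by rw [hw]
      _ = (w*σ)*α := by
          rw [show (w*(σ*α*τ))*τ' = ((w*σ)*α)*(τ*τ') from by noncomm_ring, hτ, mul_one]
    · rintro ⟨w, rfl⟩
      have h1 : ((w*σ')*(σ*α*τ))*β = 0 := (H2 _).mpr ⟨w*σ', rfl⟩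
      calc (w*α)*(τ*β*σ) = (w*(σ'*σ))*(α*(τ*(β*σ))) := by rw [hσ']; noncomm_ring
      _ = (((w*σ')*(σ*α*τ))*β)*σ := by noncomm_ring
      _ = 0 := by rw [h1, zero_mul]

/- forward direction -/
lemma fwd
    (h : ∀ x : TrivSqZeroExt R R, ∃ y, ({z | z * x = 0} = {z | ∃ w, z = w * y}) ∧
      ({z | z * y = 0} = {z | ∃ w, z = w * x}))
    (a : R) : ∃ u : Rˣ, a = a * u * a := by
  obtain ⟨β, hα1, hα2⟩ := h (tmk 0 a)
  obtain ⟨c, d, rfl⟩ : ∃ p q, β = tmk p q := ⟨β.fst, β.snd, texp β⟩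
  have H1 : ∀ t : TrivSqZeroExt R R, t * tmk 0 a = 0 ↔ ∃ w, t = w * tmk c d := fun t => by
    simpa using Set.ext_iff.mp hα1 t
  have H2 : ∀ t : TrivSqZeroExt R R, t * tmk c d = 0 ↔ ∃ w, t = w * tmk 0 a := fun t => by
    simpa using Set.ext_iff.mp hα2 t
  have F1 : c * a = 0 := by
    have m := (H1 (tmk c d)).mpr ⟨1, (one_mul _).symm⟩
    rw [tmul, tmk_eq_zero] at m
    simpa using m.2
  have F3 : a * c = 0 := by
    have m := (H2 (tmk 0 a)).mpr ⟨1, (one_mul _).symm⟩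
    rw [tmul, tmk_eq_zero] at m
    simpa using m.2
  have F2 : ∀ z : R, z * a = 0 → ∃ m, z = m * c := by
    intro z hz
    have m := (H1 (tmk z 0)).mp (by rw [tmul, tmk_eq_zero]; constructor <;> simp [hz])
    obtain ⟨w, hw⟩ := m
    rw [texp w, tmul, tmk_eq] at hw
    exact ⟨w.fst, hw.1⟩
  have F4 : ∀ z : R, z * c = 0 → ∃ m, z = m * a := by
    intro z hz
    have m := (H2 (tmk 0 z)).mp (by rw [tmul, tmk_eq_zero]; constructor <;> simp [hz])
    obtain ⟨w, hw⟩ := m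
    rw [texp w, tmul, tmk_eq] at hw
    exact ⟨w.fst, by simpa using hw.2⟩
  have F5 : ∀ t y : R, t * (a * d) + y * c = 0 → t * a = 0 := by
    intro t y hty
    have m := (H2 (tmk (t*a) y)).mp (by
      rw [tmul, tmk_eq_zero]
      constructor
      · rw [mul_assoc, F3, mul_zero]
      · rw [mul_assoc]; exact hty)
    obtain ⟨w, hw⟩ := m
    rw [texp w, tmul, tmk_eq] at hw
    simpa using hw.1
  have F6 : ∃ r n : R, r * (a * d) + n * c = 1 := by
    have m := (H1 (tmk 0 1)).mp (by rw [tmul, tmk_eq_zero]; constructor <;> simp)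
    obtain ⟨w, hw⟩ := m
    rw [texp w, tmul, tmk_eq] at hw
    obtain ⟨m', hm'⟩ := F4 w.fst hw.1.symm
    refine ⟨m', w.snd, ?_⟩
    rw [← mul_assoc, ← hm']
    exact hw.2.symm
  obtain ⟨r, n, hrn⟩ := F6
  have hc1 : c * (r * (a * d)) + c * (n * c) = c := by
    calc c * (r * (a * d)) + c * (n * c) = c * (r * (a * d) + n * c) := by rw [mul_add]
    _ = c := by rw [hrn, mul_one]
  have G1 : c * r * a = 0 := by
    apply F5 (c * r) (c * n - 1)
    calc (c * r) * (a * d) + (c * n - 1) * c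
        = (c * (r * (a * d)) + c * (n * c)) - c := by noncomm_ring
    _ = 0 := by rw [hc1, sub_self]
  have G0 : c * (r * (a * d)) = 0 := by
    rw [← mul_assoc, ← mul_assoc, G1, zero_mul]
  have G2 : c * n * c = c := by
    rw [mul_assoc]
    rw [G0, zero_add] at hc1
    exact hc1
  have hs1 : ∃ s, 1 - c * (n * c * n) = s * a := by
    apply F4
    calc (1 - c * (n * c * n)) * c = c - (c * n * c) * (n * c) := by noncomm_ring
    _ = c - c * (n * c) := by rw [G2]
    _ = c - c := by rw [← mul_assoc, G2]
    _ = 0 := sub_self c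
  obtain ⟨s, hs⟩ := hs1
  obtain ⟨v, hv⟩ := lemA c n a s G2 F3 F1 hs.symm F2
  obtain ⟨σ, hσ⟩ := F4 (1 - c * ↑v) (by rw [sub_mul, one_mul, hv, sub_self])
  have G4 : c * ↑v * c = c := hv
  have G4a : a * σ * a = a := by
    have ha1 : a * (1 - c * ↑v) = a := by
      rw [mul_sub, mul_one, ← mul_assoc, F3, zero_mul, sub_zero]
    calc a * σ * a = a * (σ * a) := by rw [mul_assoc]
    _ = a * (1 - c * ↑v) := by rw [← hσ]
    _ = a := ha1
  obtain ⟨s', hs'⟩ := F2 (1 - a * (σ * a * σ)) (by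
    calc (1 - a * (σ * a * σ)) * a = a - (a * σ * a) * (σ * a) := by noncomm_ring
    _ = a - a * (σ * a) := by rw [G4a]
    _ = a - a := by rw [← mul_assoc, G4a]
    _ = 0 := sub_self a)
  obtain ⟨u, hu⟩ := lemA a σ c s' G4a F1 F3 hs'.symm F4
  exact ⟨u, hu.symm⟩

lemma bwd (H : ∀ a : R, ∃ u : Rˣ, a = a * u * a) (α : TrivSqZeroExt R R) :
    ∃ y, ({z | z * α = 0} = {z | ∃ w, z = w * y}) ∧
      ({z | z * y = 0} = {z | ∃ w, z = w * α}) := by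
  obtain ⟨a0, b0, rfl⟩ : ∃ p q, α = tmk p q := ⟨α.fst, α.snd, texp α⟩
  obtain ⟨u₀, hu₀⟩ := H a0
  set e : R := ↑u₀ * a0 with hedef
  have he : e * e = e := by
    calc e * e = ↑u₀ * (a0 * ↑u₀ * a0) := by rw [hedef]; noncomm_ring
    _ = e := by rw [← hu₀, hedef]
  clear_value e
  set f : R := 1 - e with hfdef
  have hf : f * f = f := by
    calc f * f = 1 - e - e + e * e := by rw [hfdef]; noncomm_ring
    _ = f := by rw [he, hfdef]; abel
  have hef : e * f = 0 := by rw [hfdef, mul_sub, mul_one, he, sub_self]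
  have hfe : f * e = 0 := by rw [hfdef, sub_mul, one_mul, he, sub_self]
  clear_value f
  set b1 : R := ↑u₀ * b0 with hb1def
  clear_value b1
  set c : R := f * b1 * f with hcdef
  have hc : c = f * c * f := by
    calc c = (f * f) * b1 * (f * f) := by rw [hcdef, hf]
    _ = f * (f * b1 * f) * f := by noncomm_ring
    _ = f * c * f := by rw [← hcdef]
  clear_value c
  obtain ⟨v, w, hvf, hwf, hvw, hwv, hcvc⟩ := corner H f c hf hc
  set g : R := v * c with hgdef
  have hg : g * g = g := by
    calc g * g = v * (c * v * c) := by rw [hgdef]; noncomm_ring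
    _ = g := by rw [hcvc, hgdef]
  clear_value g
  have hev : e * v = 0 := by
    have h' : e * v = (e * f) * (v * f) := by
      conv_lhs => rw [hvf]
      noncomm_ring
    rw [h', hef, zero_mul]
  have hve : v * e = 0 := by
    have h' : v * e = (f * v) * (f * e) := by
      conv_lhs => rw [hvf]
      noncomm_ring
    rw [h', hfe, mul_zero]
  have hew : e * w = 0 := by
    have h' : e * w = (e * f) * (w * f) := by
      conv_lhs => rw [hwf]
      noncomm_ring
    rw [h', hef, zero_mul]
  have hce : c * e = 0 := by
    have h' : c * e = (f * c) * (f * e) := by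
      conv_lhs => rw [hc]
      noncomm_ring
    rw [h', hfe, mul_zero]
  have hec : e * c = 0 := by
    have h' : e * c = (e * f) * (c * f) := by
      conv_lhs => rw [hc]
      noncomm_ring
    rw [h', hef, zero_mul]
  have heg : e * g = 0 := by rw [hgdef, ← mul_assoc, hev, zero_mul]
  have hge : g * e = 0 := by rw [hgdef, mul_assoc, hce, mul_zero]
  -- morphicness of (e, g)
  have Pg : ∃ y, ({z : TrivSqZeroExt R R | z * tmk e g = 0} = {z | ∃ w', z = w' * y}) ∧
      ({z | z * y = 0} = {z | ∃ w', z = w' * tmk e g}) := by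
    refine ⟨tmk (1-e-g) g, ell_orth e g he hg heg hge, ?_⟩
    have he' : (1-e-g)*(1-e-g) = 1-e-g := by
      calc (1-e-g)*(1-e-g) = (1-e-g) - (e - e*e - g*e) - (g - e*g - g*g) := by noncomm_ring
      _ = 1-e-g := by rw [he, hg, hge, heg]; abel
    have h1 : (1-e-g)*g = 0 := by
      calc (1-e-g)*g = g - e*g - g*g := by noncomm_ring
      _ = 0 := by rw [hg, heg]; abel
    have h2 : g*(1-e-g) = 0 := by
      calc g*(1-e-g) = g - g*e - g*g := by noncomm_ring
      _ = 0 := by rw [hg, hge]; abel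
    have h3 := ell_orth (1-e-g) g he' hg h1 h2
    rw [show (1:R)-(1-e-g)-g = e from by abel] at h3
    exact h3
  -- step 1 : strip the left unit (e+v, 0)
  have u1a : tmk (e+v) 0 * tmk (e+w) 0 = 1 := by
    rw [tmul, tone, tmk_eq]
    constructor
    · calc (e+v)*(e+w) = e*e + e*w + v*e + v*w := by noncomm_ring
      _ = 1 := by rw [he, hew, hve, hvw, hfdef]; abel
    · simp
  have hwe : w * e = 0 := by
    have h' : w * e = (f * w) * (f * e) := by
      conv_lhs => rw [hwf]
      noncomm_ring
    rw [h', hfe, mul_zero]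
  have u1b : tmk (e+w) 0 * tmk (e+v) 0 = 1 := by
    rw [tmul, tone, tmk_eq]
    constructor
    · calc (e+w)*(e+v) = e*e + e*v + w*e + w*v := by noncomm_ring
      _ = 1 := by rw [he, hev, hwe, hwv, hfdef]; abel
    · simp
  have step1 : tmk (e+v) 0 * tmk e c * 1 = tmk e g := by
    rw [mul_one, tmul, tmk_eq]
    constructor
    · rw [add_mul, he, hve, add_zero]
    · rw [zero_mul, add_zero, add_mul, hec, zero_add, hgdef]
  have P2 := transfer (tmk (e+v) 0) (tmk (e+w) 0) 1 1 (tmk e c) (tmk e g)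
    u1a u1b (one_mul 1) (one_mul 1) step1 Pg
  -- step 2 : strip the left unit (1, -f*b1)
  have u2a : tmk 1 (-(f*b1)) * tmk 1 (f*b1) = 1 := by
    rw [tmul, tone, tmk_eq]; constructor <;> simp
  have u2b : tmk 1 (f*b1) * tmk 1 (-(f*b1)) = 1 := by
    rw [tmul, tone, tmk_eq]; constructor <;> simp
  have step2 : tmk 1 (-(f*b1)) * tmk e (f*b1) * 1 = tmk e c := by
    rw [mul_one, tmul, tmk_eq]
    constructor
    · rw [one_mul]
    · rw [hcdef, hfdef]; noncomm_ring
  have P1 := transfer (tmk 1 (-(f*b1))) (tmk 1 (f*b1)) 1 1 (tmk e (f*b1)) (tmk e c)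
    u2a u2b (one_mul 1) (one_mul 1) step2 P2
  -- step 3 : strip the left unit (u₀, 0) and right unit (1, -b1)
  have u3a : tmk (u₀ : R) 0 * tmk ((u₀⁻¹ : Rˣ) : R) 0 = 1 := by
    rw [tmul, tone, tmk_eq]
    constructor
    · exact Units.mul_inv u₀
    · simp
  have u3b : tmk ((u₀⁻¹ : Rˣ) : R) 0 * tmk (u₀ : R) 0 = 1 := by
    rw [tmul, tone, tmk_eq]
    constructor
    · exact Units.inv_mul u₀
    · simp
  have u4a : tmk 1 (-b1) * tmk 1 b1 = 1 := by
    rw [tmul, tone, tmk_eq]; constructor <;> simp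
  have u4b : tmk 1 b1 * tmk 1 (-b1) = 1 := by
    rw [tmul, tone, tmk_eq]; constructor <;> simp
  have step3 : tmk (u₀ : R) 0 * tmk a0 b0 * tmk 1 (-b1) = tmk e (f*b1) := by
    rw [tmul, tmul, tmk_eq]
    constructor
    · rw [mul_one, hedef]
    · rw [hfdef, hedef, hb1def]; noncomm_ring
  exact transfer (tmk (u₀ : R) 0) (tmk ((u₀⁻¹ : Rˣ) : R) 0) (tmk 1 (-b1)) (tmk 1 b1)
    (tmk a0 b0) (tmk e (f*b1)) u3a u3b u4a u4b step3 P1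

end Stmt9Aux

/-- The trivial extension `R ⋉ R` (i.e. `R[t]/(t²)`) is left morphic if and only if
`R` is unit regular. -/
theorem stmt9 {R : Type*} [Ring R] :
    IsLeftMorphicRing (TrivSqZeroExt R R) ↔ ∀ a : R, ∃ u : Rˣ, a = a * u * a := by
  constructor
  · intro h
    exact fun a => Stmt9Aux.fwd h a
  · intro H α
    exact Stmt9Aux.bwd H α
end

section
/- Suppose R is a ring and M a bimodule such that R ⋉ M is left morphic. If e ∈ R is a central idempotent, then em = me for every m ∈ M. -/
open TrivSqZeroExt

/-- In a left morphic ring, a left invertible element is invertible (direct finiteness). -/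
theorem left_inv_right_inv {S : Type*} [Ring S] (h : IsLeftMorphicRing S)
    (a b : S) (hba : b * a = 1) : a * b = 1 := by
  obtain ⟨y, g1, g2⟩ := h a
  have hone : (1 : S) ∈ {z : S | ∃ w, z = w * a} := ⟨b, hba.symm⟩
  have h1y : (1 : S) * y = 0 := (Set.ext_iff.mp g2 _).mpr hone
  have hy0 : y = 0 := by simpa using h1y
  have h0 : (a * b - 1) * a = 0 := by
    rw [sub_mul, one_mul, mul_assoc, hba, mul_one, sub_self]
  obtain ⟨w', hw'⟩ := (Set.ext_iff.mp g1 _).mp h0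
  rw [hy0, mul_zero] at hw'
  exact sub_eq_zero.mp hw'

/-- Key lemma: if `R ⋉ M` is left morphic, `e` central idempotent, and `n ∈ eM(1-e)`,
then `n = 0`. -/
theorem corner_zero {R M : Type*} [Ring R] [AddCommGroup M] [Module R M] [Module Rᵐᵒᵖ M]
    [SMulCommClass R Rᵐᵒᵖ M] (h : IsLeftMorphicRing (TrivSqZeroExt R M))
    (e : R) (he : e * e = e) (hc : ∀ r : R, e * r = r * e)
    (n : M) (hn1 : e • n = n) (hn2 : MulOpposite.op e • n = 0) : n = 0 := by
  obtain ⟨y, hy1, hy2⟩ := h (inr n)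
  -- (1 - inl e) kills inr n on the left
  have hmem : ((1 : TrivSqZeroExt R M) - inl e) * inr n = 0 := by
    rw [sub_mul, one_mul, inl_mul_inr, hn1, sub_self]
  obtain ⟨w, hw⟩ : ∃ w, (1 : TrivSqZeroExt R M) - inl e = w * y :=
    (Set.ext_iff.mp hy1 _).mp hmem
  have hxy : (inr n : TrivSqZeroExt R M) * y = 0 :=
    (Set.ext_iff.mp hy2 _).mpr ⟨1, (one_mul _).symm⟩
  set r := fst y with hr
  set u := fst w with hu
  have hur : u * r = 1 - e := by
    have := congrArg fst hw
    simpa [fst_mul] using this.symm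
  have hnr : MulOpposite.op r • n = 0 := by
    have := congrArg snd hxy
    simpa [snd_mul] using this
  set f := 1 - e with hf
  have hef : e * f = 0 := by rw [hf, mul_sub, mul_one, he, sub_self]
  have hfe : f * e = 0 := by rw [hf, sub_mul, one_mul, he, sub_self]
  have hff : f * f = f := by
    have h1 : f * f = 1 - e - e + e * e := by rw [hf]; noncomm_ring
    rw [h1, he, hf]; abel
  have hfr : f * r = r * f := by rw [hf, sub_mul, mul_sub, one_mul, mul_one, hc r]
  have hBA : (e + u * f) * (e + f * r) = 1 := by
    have expand : (e + u * f) * (e + f * r)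
        = e * e + (e * f) * r + u * (f * e) + u * ((f * f) * r) := by noncomm_ring
    rw [expand, he, hef, hfe, hff, zero_mul, mul_zero, hfr, ← mul_assoc, hur, hff, hf]
    abel
  -- left morphic rings are directly finite, so e + f*r is invertible
  have hAB : (e + f * r) * (e + u * f) = 1 := by
    have := left_inv_right_inv h (inl (e + f * r)) (inl (e + u * f))
      (by rw [inl_mul_inl, hBA, inl_one])
    rw [inl_mul_inl] at this
    have := congrArg fst this
    simpa [fst_inl] using this
  -- right multiplication by (e + f*r) kills n
  have hAn : MulOpposite.op (e + f * r) • n = 0 := by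
    have hfn : MulOpposite.op f • n = n := by
      rw [hf, MulOpposite.op_sub, sub_smul, MulOpposite.op_one, one_smul, hn2, sub_zero]
    rw [MulOpposite.op_add, add_smul, hn2, MulOpposite.op_mul, mul_smul, hfn, hnr, add_zero]
  have hfin := congrArg (fun a : R => MulOpposite.op a • n) hAB
  simp only [MulOpposite.op_mul, mul_smul, MulOpposite.op_one, one_smul] at hfin
  rw [hAn, smul_zero] at hfin
  exact hfin.symm

/-- If `R ⋉ M` is left morphic and `e ∈ R` is a central idempotent, then
`em = me` for every `m ∈ M`. -/
theorem stmt10 {R M : Type*} [Ring R] [AddCommGroup M] [Module R M] [Module Rᵐᵒᵖ M]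
    [SMulCommClass R Rᵐᵒᵖ M] (h : IsLeftMorphicRing (TrivSqZeroExt R M))
    (e : R) (he : IsIdempotentElem e) (hc : ∀ r : R, e * r = r * e) :
    ∀ m : M, e • m = MulOpposite.op e • m := by
  intro m
  have hee : e * e = e := he
  have hc2 : ∀ r : R, (1 - e) * r = r * (1 - e) := fun r => by
    rw [sub_mul, mul_sub, one_mul, mul_one, hc r]
  have he2 : (1 - e) * (1 - e) = 1 - e := by
    have h1 : (1 - e) * (1 - e) = 1 - e - e + e * e := by noncomm_ring
    rw [h1, hee]; abel
  have ha : ∀ z : M, e • (e • z) = e • z := fun z => by rw [← mul_smul, hee]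
  have hb : ∀ z : M, MulOpposite.op e • (MulOpposite.op e • z) = MulOpposite.op e • z :=
    fun z => by rw [← mul_smul, ← MulOpposite.op_mul, hee]
  have hcomm : ∀ z : M, e • (MulOpposite.op e • z) = MulOpposite.op e • (e • z) :=
    fun z => smul_comm e (MulOpposite.op e) z
  -- em(1-e) part
  have k1 : e • m - MulOpposite.op e • (e • m) = 0 := by
    apply corner_zero h e hee hc
    · rw [smul_sub, ha m, hcomm (e • m), ha m]
    · rw [smul_sub, hb (e • m), sub_self]
  -- (1-e)me part
  have k2 : MulOpposite.op e • m - e • (MulOpposite.op e • m) = 0 := by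
    apply corner_zero h (1 - e) he2 hc2
    · rw [sub_smul, one_smul, smul_sub, ha (MulOpposite.op e • m), sub_self, sub_zero]
    · rw [MulOpposite.op_sub, sub_smul, MulOpposite.op_one, one_smul,
        smul_sub (MulOpposite.op e), hb m, ← hcomm (MulOpposite.op e • m), hb m, sub_self]
  rw [sub_eq_zero] at k1 k2
  rw [k1, ← hcomm m]
  exact k2.symm
end

section
/- Suppose R is a ring and M a bimodule such that R ⋉ M is left morphic. If a ∈ R satisfies ann_r^R(a) = 0 or ann_l^R(a) = 0, then Ma = M and there exists m ∈ M with ann_l^R(m) = Ra and ann_l^M(a) = Rm. -/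
open TrivSqZeroExt

/-- If `R ⋉ M` is left morphic and `a ∈ R` is a left or right nonzerodivisor, then
`Ma = M` and there exists `m ∈ M` with `ann_l^R(m) = Ra` and `ann_l^M(a) = Rm`. -/
theorem stmt18 {R M : Type*} [Ring R] [AddCommGroup M] [Module R M] [Module Rᵐᵒᵖ M]
    [SMulCommClass R Rᵐᵒᵖ M] (h : IsLeftMorphicRing (TrivSqZeroExt R M)) (a : R)
    (ha : (∀ r : R, a * r = 0 → r = 0) ∨ (∀ r : R, r * a = 0 → r = 0)) :
    (∀ x : M, ∃ y : M, x = MulOpposite.op a • y) ∧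
      ∃ m : M, ({r : R | r • m = 0} = {r : R | ∃ s : R, r = s * a}) ∧
        ({x : M | MulOpposite.op a • x = 0} = {x : M | ∃ r : R, x = r • m}) := by
  obtain ⟨y, h1, h2⟩ := h (inl a : TrivSqZeroExt R M)
  have h1' : ∀ z : TrivSqZeroExt R M, z * inl a = 0 ↔ ∃ w, z = w * y :=
    fun z => Set.ext_iff.mp h1 z
  have h2' : ∀ z : TrivSqZeroExt R M, z * y = 0 ↔ ∃ w, z = w * inl a :=
    fun z => Set.ext_iff.mp h2 z
  have hya : y * inl a = 0 := (h1' y).mpr ⟨1, (one_mul y).symm⟩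
  have hay : (inl a : TrivSqZeroExt R M) * y = 0 := (h2' (inl a)).mpr ⟨1, (one_mul _).symm⟩
  have hb : fst y = 0 := by
    rcases ha with ha | ha
    · apply ha
      have := congrArg fst hay
      simpa using this
    · apply ha
      have := congrArg fst hya
      simpa using this
  have ham : a • snd y = 0 := by
    have := congrArg snd hay
    simpa using this
  have haop : MulOpposite.op a • snd y = 0 := by
    have := congrArg snd hya
    simpa [hb] using this
  refine ⟨?_, snd y, ?_, ?_⟩
  · intro x
    have hx : (inr x : TrivSqZeroExt R M) * y = 0 := by
      ext <;> simp [hb]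
    obtain ⟨w, hw⟩ := (h2' _).mp hx
    refine ⟨snd w, ?_⟩
    have := congrArg snd hw
    simpa using this
  · ext r
    simp only [Set.mem_setOf_eq]
    constructor
    · intro hr
      have hz : (inl r : TrivSqZeroExt R M) * y = 0 := by
        ext <;> simp [hb, hr]
      obtain ⟨w, hw⟩ := (h2' _).mp hz
      exact ⟨fst w, by simpa using congrArg fst hw⟩
    · rintro ⟨s, rfl⟩
      rw [mul_smul, ham, smul_zero]
  · ext x
    simp only [Set.mem_setOf_eq]
    constructor
    · intro hx
      have hz : (inr x : TrivSqZeroExt R M) * inl a = 0 := by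
        ext <;> simp [hx]
      obtain ⟨w, hw⟩ := (h1' _).mp hz
      refine ⟨fst w, ?_⟩
      have := congrArg snd hw
      simpa [hb] using this
    · rintro ⟨r, rfl⟩
      rw [← smul_comm r (MulOpposite.op a), haop, smul_zero]
end

section
/- Let R be a domain that is not a division ring, and M an (R,R)-bimodule. Then R ⋉ M is left morphic if and only if: (1) M is divisible as a right R-module; (2) for every nonzero a ∈ R there exists m ∈ M with ann_l^R(m) = Ra and ann_l^M(a) = Rm; and (3) for every m ∈ M there exists a nonzero a ∈ R with ann_l^R(m) = Ra and ann_l^M(a) = Rm. -/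
/-!
In `S = R ⋉ M`, an element `x` with `x.fst ≠ 0` has `ann_l(x) = 0 ⋉ ann_l^M(x.fst)`, while
`ann_l(0, m) = ann_l^R(m) ⋉ M` and `S (0, m) = 0 ⋉ Rm`; if `M x.fst = M`, also
`S x = R x.fst ⋉ M`. So `x` and `(0, m)` witness each other's morphic condition exactly when
`ann_l^R(m) = R x.fst` and `ann_l^M(x.fst) = Rm`; conversely the witness of `(a, 0)` must be some
`(0, m)`, and `ann_l(0, m) = S x` forces `M x.fst = M`. The one remaining case is `(0, m)` with
a witness `(0, n)`: then `M = Rn` with `n` torsion-free, so right multiplication by any `c ≠ 0`,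
being surjective, is injective. For a non-unit `c ≠ 0` the witness `(0, m')` of `(c, 0)` then has
`m' c = 0`, so `m' = 0` and `R = ann_l^R(m') = Rc`, a contradiction.
-/

open TrivSqZeroExt

open scoped RightActions

section Defs

variable (R M : Type*) [Ring R] [AddCommGroup M] [Module R M] [Module Rᵐᵒᵖ M]

def IsRightDivisible : Prop :=
  ∀ (a : R) (x : M), {r : R | a * r = 0} ⊆ {r : R | x <• r = 0} → ∃ y : M, x = y <• a

variable {R M}

def IsAnnPair (a : R) (m : M) : Prop :=
  {r : R | r • m = 0} = {r : R | ∃ s : R, r = s * a} ∧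
    {x : M | x <• a = 0} = {x : M | ∃ r : R, x = r • m}

end Defs

def IsLeftMorphicPair {S : Type*} [Ring S] (x y : S) : Prop :=
  {z : S | z * x = 0} = {z : S | ∃ w, z = w * y} ∧ {z : S | z * y = 0} = {z : S | ∃ w, z = w * x}

theorem IsLeftMorphicPair.symm {S : Type*} [Ring S] {x y : S} (h : IsLeftMorphicPair x y) :
    IsLeftMorphicPair y x :=
  And.symm h

section Module

variable {R M : Type*} [Ring R] [AddCommGroup M] [Module Rᵐᵒᵖ M]

theorem isRightDivisible_iff [NoZeroDivisors R] :
    IsRightDivisible R M ↔ ∀ a : R, a ≠ 0 → Function.Surjective (· <• a : M → M) := by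
  constructor
  · intro h a ha x
    obtain ⟨y, hy⟩ := h a x fun r hr => by
      simp [(mul_eq_zero.mp hr).resolve_left ha]
    exact ⟨y, hy.symm⟩
  · intro h a x hx
    by_cases ha : a = 0
    · have hx0 : x = 0 := by simpa using hx (show a * 1 = 0 by simp [ha])
      exact ⟨0, by simp [hx0]⟩
    · obtain ⟨y, hy⟩ := h a ha x
      exact ⟨y, hy.symm⟩

theorem isUnit_of_isAnnPair_zero [Module R M] [NoZeroDivisors R] {a : R}
    (h : IsAnnPair a (0 : M)) : IsUnit a := by
  obtain ⟨s, hs⟩ : ∃ s : R, 1 = s * a := h.1.subset (smul_zero (1 : R))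
  exact IsUnit.of_mul_eq_one_right s hs.symm

/-- On `M = Rn` with `n` torsion-free, right multiplication by `c` is right multiplication
by the `d` with `n <• c = d • n`, transported along `r ↦ r • n`. -/
theorem eq_zero_of_op_smul_eq_zero_of_surjective [Module R M] [IsDomain R]
    [SMulCommClass R Rᵐᵒᵖ M]
    {n : M} (hgen : ∀ v : M, ∃ r : R, v = r • n) (hfree : ∀ r : R, r • n = 0 → r = 0) {c : R}
    (hc : Function.Surjective (· <• c : M → M)) {v : M} (hv : v <• c = 0) : v = 0 := by
  obtain ⟨d, hd⟩ := hgen (n <• c)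
  have smul_op_smul (r : R) : (r • n) <• c = (r * d) • n := by
    rw [← smul_comm, hd, mul_smul]
  obtain ⟨u, hu⟩ := hc n
  obtain ⟨s, rfl⟩ := hgen u
  have hsd : s * d = 1 := by
    refine sub_eq_zero.mp (hfree _ ?_)
    rw [sub_smul, ← smul_op_smul, show (s • n) <• c = n from hu, one_smul, sub_self]
  have hd0 : d ≠ 0 := right_ne_zero_of_mul_eq_one hsd
  obtain ⟨r, rfl⟩ := hgen v
  rw [smul_op_smul] at hv
  rw [(mul_eq_zero.mp (hfree _ hv)).resolve_right hd0, zero_smul]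

end Module

section TrivSqZeroExt

variable {R M : Type*} [Ring R] [AddCommGroup M] [Module R M] [Module Rᵐᵒᵖ M]

theorem mul_inr_eq_inr (w : TrivSqZeroExt R M) (m : M) : w * inr m = inr (w.fst • m) := by
  ext <;> simp

theorem setOf_mul_inr_eq_zero (m : M) :
    {z : TrivSqZeroExt R M | z * inr m = 0} = fst ⁻¹' {r : R | r • m = 0} := by
  ext z
  rw [Set.mem_ofPred, mul_inr_eq_inr, ← inr_zero, inr_injective.eq_iff, Set.mem_preimage,
    Set.mem_ofPred]

theorem setOf_eq_mul_inr (m : M) :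
    {z : TrivSqZeroExt R M | ∃ w, z = w * inr m} = inr '' {v : M | ∃ r : R, v = r • m} := by
  ext z
  constructor
  · rintro ⟨w, rfl⟩
    exact ⟨_, ⟨w.fst, rfl⟩, (mul_inr_eq_inr w m).symm⟩
  · rintro ⟨_, ⟨r, rfl⟩, rfl⟩
    exact ⟨inl r, by rw [mul_inr_eq_inr, fst_inl]⟩

theorem setOf_mul_eq_zero_of_fst_ne_zero [NoZeroDivisors R] {x : TrivSqZeroExt R M}
    (hx : x.fst ≠ 0) : {z : TrivSqZeroExt R M | z * x = 0} = inr '' {v : M | v <• x.fst = 0} := by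
  ext z
  constructor
  · intro hz
    have hz1 : z.fst = 0 := (mul_eq_zero.mp (congrArg fst hz)).resolve_right hx
    refine ⟨z.snd, ?_, TrivSqZeroExt.ext hz1.symm rfl⟩
    simpa [hz1] using congrArg snd hz
  · rintro ⟨v, hv, rfl⟩
    exact TrivSqZeroExt.ext (zero_mul _) (by simpa using hv)

theorem setOf_eq_mul_of_surjective {x : TrivSqZeroExt R M}
    (hx : Function.Surjective (· <• x.fst : M → M)) :
    {z : TrivSqZeroExt R M | ∃ w, z = w * x} = fst ⁻¹' {r : R | ∃ s : R, r = s * x.fst} := by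
  ext z
  constructor
  · rintro ⟨w, rfl⟩
    exact ⟨w.fst, rfl⟩
  · rintro ⟨s, hs⟩
    obtain ⟨u, hu⟩ := hx (z.snd - s • x.snd)
    refine ⟨inl s + inr u, TrivSqZeroExt.ext (by simpa using hs) ?_⟩
    simp only [snd_mul, fst_add, snd_add, fst_inl, snd_inl, fst_inr, snd_inr, add_zero, zero_add]
    rw [show u <• x.fst = _ from hu, add_sub_cancel]

theorem surjective_of_setOf_mul_inr_eq_zero_eq [NoZeroDivisors R] {x : TrivSqZeroExt R M}
    {m : M} (hx : x.fst ≠ 0)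
    (h : {z : TrivSqZeroExt R M | z * inr m = 0} = {z | ∃ w, z = w * x}) :
    Function.Surjective (· <• x.fst : M → M) := by
  intro v
  obtain ⟨w, hw⟩ : ∃ w, inr v = w * x := h.subset (inr_mul_inr R v m)
  have hw1 : w.fst = 0 := (mul_eq_zero.mp (congrArg fst hw).symm).resolve_right hx
  exact ⟨w.snd, by simpa [hw1] using (congrArg snd hw).symm⟩

end TrivSqZeroExt

section LeftMorphic

variable {R M : Type*} [Ring R] [AddCommGroup M] [Module R M] [Module Rᵐᵒᵖ M]
  [SMulCommClass R Rᵐᵒᵖ M]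

theorem isLeftMorphicPair_inr_iff [NoZeroDivisors R] {x : TrivSqZeroExt R M} {m : M}
    (hx : x.fst ≠ 0) (hdiv : Function.Surjective (· <• x.fst : M → M)) :
    IsLeftMorphicPair x (inr m) ↔ IsAnnPair x.fst m := by
  rw [IsLeftMorphicPair, IsAnnPair, and_comm, setOf_mul_eq_zero_of_fst_ne_zero hx,
    setOf_eq_mul_inr, setOf_mul_inr_eq_zero, setOf_eq_mul_of_surjective hdiv,
    (Set.image_injective.mpr inr_injective).eq_iff,
    (Set.preimage_injective.mpr fst_surjective).eq_iff]

theorem IsLeftMorphicPair.isAnnPair [NoZeroDivisors R] {x : TrivSqZeroExt R M} {m : M}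
    (hx : x.fst ≠ 0) (h : IsLeftMorphicPair x (inr m)) : IsAnnPair x.fst m :=
  (isLeftMorphicPair_inr_iff hx (surjective_of_setOf_mul_inr_eq_zero_eq hx h.2)).mp h

theorem IsLeftMorphicPair.inr_inr {m n : M}
    (h : IsLeftMorphicPair (inr m : TrivSqZeroExt R M) (inr n)) :
    (∀ v : M, ∃ r : R, v = r • n) ∧ ∀ r : R, r • n = 0 → r = 0 := by
  rw [IsLeftMorphicPair, setOf_mul_inr_eq_zero, setOf_mul_inr_eq_zero, setOf_eq_mul_inr,
    setOf_eq_mul_inr] at h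
  refine ⟨fun v => ?_, fun r hr => ?_⟩
  · obtain ⟨v', hv', hv'v⟩ := h.1.subset (show inr v ∈ fst ⁻¹' _ by simp)
    rwa [← inr_injective hv'v]
  · obtain ⟨v, -, hv⟩ := h.2.subset (show inl r ∈ fst ⁻¹' _ from hr)
    simpa using (congrArg fst hv).symm

theorem IsLeftMorphicRing.surjective_and_exists_isAnnPair [NoZeroDivisors R]
    (h : IsLeftMorphicRing (TrivSqZeroExt R M)) {a : R} (ha : a ≠ 0) :
    Function.Surjective (· <• a : M → M) ∧ ∃ m : M, IsAnnPair a m := by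
  obtain ⟨y, hy⟩ : ∃ y, IsLeftMorphicPair (inl a : TrivSqZeroExt R M) y := h (inl a)
  obtain ⟨m, -, rfl⟩ : y ∈ inr '' {v : M | v <• a = 0} := by
    rw [← fst_inl M a, ← setOf_mul_eq_zero_of_fst_ne_zero (by exact ha), hy.1]
    exact ⟨1, (one_mul y).symm⟩
  exact ⟨surjective_of_setOf_mul_inr_eq_zero_eq (x := inl a) ha hy.2, m,
    hy.isAnnPair (x := inl a) ha⟩

theorem IsLeftMorphicRing.exists_isAnnPair [IsDomain R]
    (h : IsLeftMorphicRing (TrivSqZeroExt R M)) (hnd : ¬∀ a : R, a ≠ 0 → IsUnit a) (m : M) :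
    ∃ a : R, a ≠ 0 ∧ IsAnnPair a m := by
  obtain ⟨y, hy⟩ : ∃ y, IsLeftMorphicPair (inr m : TrivSqZeroExt R M) y := h (inr m)
  by_cases hy0 : y.fst = 0
  · refine absurd (fun c hc => ?_) hnd
    obtain ⟨n, rfl⟩ : ∃ n, y = inr n := ⟨y.snd, TrivSqZeroExt.ext hy0 rfl⟩
    obtain ⟨hgen, hfree⟩ := hy.inr_inr
    obtain ⟨hsurj, m', hm'⟩ := h.surjective_and_exists_isAnnPair hc
    have hm'c : m' <• c = 0 := hm'.2.superset ⟨1, (one_smul R m').symm⟩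
    have hm'0 : m' = 0 := eq_zero_of_op_smul_eq_zero_of_surjective hgen hfree hsurj hm'c
    exact isUnit_of_isAnnPair_zero (hm'0 ▸ hm')
  · exact ⟨y.fst, hy0, hy.symm.isAnnPair hy0⟩

theorem isLeftMorphicRing_of_isAnnPair [NoZeroDivisors R]
    (hdiv : ∀ a : R, a ≠ 0 → Function.Surjective (· <• a : M → M))
    (hR : ∀ a : R, a ≠ 0 → ∃ m : M, IsAnnPair a m)
    (hM : ∀ m : M, ∃ a : R, a ≠ 0 ∧ IsAnnPair a m) :
    IsLeftMorphicRing (TrivSqZeroExt R M) := by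
  intro x
  show ∃ y, IsLeftMorphicPair x y
  by_cases hx : x.fst = 0
  · obtain ⟨n, rfl⟩ : ∃ n, x = inr n := ⟨x.snd, TrivSqZeroExt.ext hx rfl⟩
    obtain ⟨a, ha, hn⟩ := hM n
    exact ⟨inl a, ((isLeftMorphicPair_inr_iff (x := inl a) ha (hdiv a ha)).mpr hn).symm⟩
  · obtain ⟨m, hm⟩ := hR x.fst hx
    exact ⟨inr m, (isLeftMorphicPair_inr_iff hx (hdiv _ hx)).mpr hm⟩

end LeftMorphic

/-- Let `R` be a domain that is not a division ring and `M` an `(R,R)`-bimodule.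
Then `R ⋉ M` is left morphic iff (1) `M` is divisible as a right `R`-module,
(2) every nonzero `a ∈ R` admits `m ∈ M` with `ann_l^R(m) = Ra`, `ann_l^M(a) = Rm`,
and (3) every `m ∈ M` admits a nonzero `a ∈ R` with `ann_l^R(m) = Ra`,
`ann_l^M(a) = Rm`. -/
theorem stmt19 {R M : Type*} [Ring R] [IsDomain R]
    (hnd : ¬∀ a : R, a ≠ 0 → IsUnit a)
    [AddCommGroup M] [Module R M] [Module Rᵐᵒᵖ M] [SMulCommClass R Rᵐᵒᵖ M] :
    IsLeftMorphicRing (TrivSqZeroExt R M) ↔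
      ((∀ (a : R) (x : M),
          ({r : R | a * r = 0} ⊆ {r : R | MulOpposite.op r • x = 0}) →
            ∃ y : M, x = MulOpposite.op a • y) ∧
        (∀ a : R, a ≠ 0 → ∃ m : M,
          ({r : R | r • m = 0} = {r : R | ∃ s : R, r = s * a}) ∧
            ({x : M | MulOpposite.op a • x = 0} = {x : M | ∃ r : R, x = r • m})) ∧
        (∀ m : M, ∃ a : R, a ≠ 0 ∧
          ({r : R | r • m = 0} = {r : R | ∃ s : R, r = s * a}) ∧
            ({x : M | MulOpposite.op a • x = 0} = {x : M | ∃ r : R, x = r • m}))) := by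
  change _ ↔ IsRightDivisible R M ∧ (∀ a : R, a ≠ 0 → ∃ m : M, IsAnnPair a m) ∧
    ∀ m : M, ∃ a : R, a ≠ 0 ∧ IsAnnPair a m
  rw [isRightDivisible_iff]
  constructor
  · intro h
    exact ⟨fun a ha => (h.surjective_and_exists_isAnnPair ha).1,
      fun a ha => (h.surjective_and_exists_isAnnPair ha).2, h.exists_isAnnPair hnd⟩
  · rintro ⟨hdiv, hR, hM⟩
    exact isLeftMorphicRing_of_isAnnPair hdiv hR hM
end
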